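/- Let F be a finite field and set r = 1 − 1/|F|. Let m ≥ 3 be a natural number and c > 0 a real number. On a probability space, let W₁, …, W_m be mutually independent real-valued random variables, each with law having probability density z ↦ ν(z − log₂(c/m), r) with respect to Lebesgue measure. Define the estimator Ẑ = φ(1/m, r)^{−m} · m · 2^{(1/m)·Σ_{i=1}^m W_i}. Then Ẑ is unbiased: 𝔼[Ẑ] = c. -/

import Mathlib

open MeasureTheory ProbabilityTheory

/-- The density `ν(z, r)` of the highest position of an F-PCSA subsketch. -/
noncomputable def nu (z r : ℝ) : ℝ :=
  (1 - Real.exp (-(2:ℝ) ^ (-z))) * r *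
    ∏' j : ℕ, (1 - (1 - Real.exp (-(2:ℝ) ^ (-z - ((j : ℝ) + 1)))) * r)

/-- `φ(t, r) = ∫ 2^{tz} ν(z, r) dz`. -/
noncomputable def phi (t r : ℝ) : ℝ := ∫ z : ℝ, (2:ℝ) ^ (t * z) * nu z r

/-!
By independence the moment generating function of `∑ Wᵢ` is the product of those of the `Wᵢ`,
and translating the density by `log₂(c/m)` gives `𝔼[2^{Wᵢ/m}] = (c/m)^{1/m} φ(1/m, r)`.
Hence `𝔼[2^{(1/m)∑ Wᵢ}] = (c/m) φ(1/m, r)^m`, and the normalisation cancels everything but `c`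
once `φ(1/m, r) > 0`. For that, the logarithms of the factors of the infinite product are
dominated by a geometric series, so the product lies in `(0, 1]`; thus `0 < ν(z, r) ≤ min 1 2^{-z}`
and `2^{tz} ν(z, r)` is integrable for `0 < t < 1`.
-/

open Real Set

noncomputable def pcsaFactor (r x : ℝ) : ℝ := 1 - (1 - exp (-x)) * r

section PcsaFactor

variable {r x : ℝ}

lemma one_sub_exp_neg_nonneg (hx : 0 ≤ x) : 0 ≤ 1 - exp (-x) := by
  simpa using exp_le_one_iff.mpr (neg_nonpos.mpr hx)

lemma one_sub_exp_neg_le_self : 1 - exp (-x) ≤ x :=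
  sub_le_comm.mp (one_sub_le_exp_neg x)

lemma one_sub_le_pcsaFactor (hr : 0 ≤ r) : 1 - r ≤ pcsaFactor r x := by
  unfold pcsaFactor
  nlinarith [exp_pos (-x)]

lemma pcsaFactor_le_one (hr : 0 ≤ r) (hx : 0 ≤ x) : pcsaFactor r x ≤ 1 := by
  unfold pcsaFactor
  nlinarith [one_sub_exp_neg_nonneg hx]

lemma neg_log_pcsaFactor_le (hr0 : 0 ≤ r) (hr1 : r < 1) (hx : 0 ≤ x) :
    -log (pcsaFactor r x) ≤ x / (1 - r) := by
  have hlow : 1 - r ≤ pcsaFactor r x := one_sub_le_pcsaFactor hr0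
  have hpos : 0 < pcsaFactor r x := by linarith
  have hnum : 1 - pcsaFactor r x ≤ x := by
    unfold pcsaFactor
    nlinarith [one_sub_exp_neg_nonneg hx, one_sub_exp_neg_le_self (x := x)]
  calc -log (pcsaFactor r x) ≤ (pcsaFactor r x)⁻¹ - 1 := by
        linarith [one_sub_inv_le_log_of_pos hpos]
    _ = (1 - pcsaFactor r x) / pcsaFactor r x := by field_simp
    _ ≤ x / (1 - r) := div_le_div₀ hx hnum (by linarith) hlow

lemma log_pcsaFactor_nonpos (hr0 : 0 ≤ r) (hr1 : r ≤ 1) (hx : 0 ≤ x) :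
    log (pcsaFactor r x) ≤ 0 :=
  log_nonpos (by linarith [one_sub_le_pcsaFactor (x := x) hr0]) (pcsaFactor_le_one hr0 hx)

end PcsaFactor

section Nu

variable {r : ℝ}

lemma nu_eq_mul_tprod_pcsaFactor (z r : ℝ) :
    nu z r = (1 - exp (-(2:ℝ) ^ (-z))) * r * ∏' j : ℕ, pcsaFactor r (2 ^ (-z - (j + 1))) :=
  rfl

lemma summable_log_pcsaFactor (hr0 : 0 ≤ r) (hr1 : r < 1) (z : ℝ) :
    Summable fun j : ℕ => log (pcsaFactor r (2 ^ (-z - (j + 1)))) := by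
  refine (summable_geometric_two.mul_left (2 ^ (-z - 1) / (1 - r))).of_norm_bounded fun j => ?_
  have hx : (0:ℝ) ≤ 2 ^ (-z - (j + 1)) := by positivity
  rw [norm_eq_abs, abs_of_nonpos (log_pcsaFactor_nonpos hr0 hr1.le hx)]
  calc _ ≤ 2 ^ (-z - (j + 1)) / (1 - r) := neg_log_pcsaFactor_le hr0 hr1 hx
    _ = 2 ^ (-z - 1) / (1 - r) * (1 / 2) ^ j := by
      rw [show -z - (j + 1) = (-z - 1) + -(j : ℝ) by ring, rpow_add two_pos, rpow_neg two_pos.le,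
        rpow_natCast, one_div_pow, one_div]
      ring

lemma tprod_pcsaFactor_mem_Ioc (hr0 : 0 ≤ r) (hr1 : r < 1) (z : ℝ) :
    ∏' j : ℕ, pcsaFactor r (2 ^ (-z - (j + 1))) ∈ Ioc 0 1 := by
  have hfac_pos : ∀ j : ℕ, 0 < pcsaFactor r (2 ^ (-z - (j + 1))) := fun j => by
    linarith [one_sub_le_pcsaFactor (x := 2 ^ (-z - (j + 1))) hr0]
  rw [← rexp_tsum_eq_tprod hfac_pos (summable_log_pcsaFactor hr0 hr1 z)]
  exact ⟨exp_pos _, exp_le_one_iff.mpr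
    (tsum_nonpos fun j => log_pcsaFactor_nonpos hr0 hr1.le (by positivity))⟩

lemma nu_nonneg (hr0 : 0 ≤ r) (hr1 : r ≤ 1) (z : ℝ) : 0 ≤ nu z r := by
  rw [nu_eq_mul_tprod_pcsaFactor]
  have := one_sub_exp_neg_nonneg (x := 2 ^ (-z)) (by positivity)
  have : 0 ≤ ∏' j : ℕ, pcsaFactor r (2 ^ (-z - (j + 1))) := tprod_nonneg fun j =>
    (sub_nonneg.mpr hr1).trans (one_sub_le_pcsaFactor (x := 2 ^ (-z - (j + 1))) hr0)
  positivity

lemma nu_pos (hr0 : 0 < r) (hr1 : r < 1) (z : ℝ) : 0 < nu z r := by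
  rw [nu_eq_mul_tprod_pcsaFactor]
  have : 0 < 1 - exp (-(2:ℝ) ^ (-z)) := by
    simpa using exp_lt_one_iff.mpr (neg_lt_zero.mpr (rpow_pos_of_pos two_pos (-z)))
  have := (tprod_pcsaFactor_mem_Ioc hr0.le hr1 z).1
  positivity

lemma nu_le_one_sub_exp (hr0 : 0 ≤ r) (hr1 : r < 1) (z : ℝ) :
    nu z r ≤ 1 - exp (-(2:ℝ) ^ (-z)) := by
  rw [nu_eq_mul_tprod_pcsaFactor]
  obtain ⟨hprod0, hprod1⟩ := tprod_pcsaFactor_mem_Ioc hr0 hr1 z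
  have := one_sub_exp_neg_nonneg (x := 2 ^ (-z)) (by positivity)
  calc _ ≤ (1 - exp (-(2:ℝ) ^ (-z))) * 1 * 1 := by gcongr
    _ = _ := by ring

@[fun_prop]
lemma measurable_nu (r : ℝ) : Measurable fun z => nu z r := by
  unfold nu
  fun_prop

lemma integrable_two_rpow_mul_nu (hr0 : 0 ≤ r) (hr1 : r < 1) {t : ℝ} (ht0 : 0 < t)
    (ht1 : t < 1) : Integrable fun z => (2:ℝ) ^ (t * z) * nu z r := by
  have hmeas : AEStronglyMeasurable (fun z => (2:ℝ) ^ (t * z) * nu z r) :=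
    (by fun_prop : Measurable fun z : ℝ => (2:ℝ) ^ (t * z)).mul (measurable_nu r)
      |>.aestronglyMeasurable
  have hnorm : ∀ z, ‖(2:ℝ) ^ (t * z) * nu z r‖ = (2:ℝ) ^ (t * z) * nu z r := fun z =>
    norm_of_nonneg (mul_nonneg (by positivity) (nu_nonneg hr0 hr1.le z))
  rw [← integrableOn_univ, ← Iic_union_Ioi (a := 0)]
  refine IntegrableOn.union ?_ ?_
  · -- for `z ≤ 0` the factor `2 ^ (t z)` decays and `ν ≤ 1`
    refine (integrableOn_exp_mul_Iic (mul_pos ht0 (log_pos one_lt_two)) 0).mono'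
      hmeas.restrict (ae_of_all _ fun z => ?_)
    rw [hnorm, show t * log 2 * z = log 2 * (t * z) by ring, ← rpow_def_of_pos two_pos]
    have : 1 - exp (-(2:ℝ) ^ (-z)) ≤ 1 := by linarith [exp_pos (-(2:ℝ) ^ (-z))]
    exact mul_le_of_le_one_right (by positivity) ((nu_le_one_sub_exp hr0 hr1 z).trans this)
  · -- for `z > 0` we use `ν(z) ≤ 2 ^ (-z)`
    refine (integrableOn_exp_mul_Ioi (mul_neg_of_neg_of_pos (sub_neg.mpr ht1)
      (log_pos one_lt_two)) 0).mono' hmeas.restrict (ae_of_all _ fun z => ?_)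
    rw [hnorm, show (t - 1) * log 2 * z = log 2 * (t * z + -z) by ring,
      ← rpow_def_of_pos two_pos, rpow_add two_pos]
    exact mul_le_mul_of_nonneg_left ((nu_le_one_sub_exp hr0 hr1 z).trans
      one_sub_exp_neg_le_self) (by positivity)

lemma phi_pos (hr0 : 0 < r) (hr1 : r < 1) {t : ℝ} (ht0 : 0 < t) (ht1 : t < 1) :
    0 < phi t r := by
  rw [phi, integral_pos_iff_support_of_nonneg
    (fun z => mul_nonneg (by positivity) (nu_nonneg hr0.le hr1.le z))
    (integrable_two_rpow_mul_nu hr0.le hr1 ht0 ht1)]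
  have : Function.support (fun z => (2:ℝ) ^ (t * z) * nu z r) = univ :=
    eq_univ_of_forall fun z => (mul_pos (by positivity) (nu_pos hr0 hr1 z)).ne'
  simp [this]

end Nu

lemma mgf_of_map_eq_withDensity_nu {Ω : Type*} [MeasurableSpace Ω] {μ : Measure Ω}
    {X : Ω → ℝ} (hX : AEMeasurable X μ) {r : ℝ} (hr0 : 0 ≤ r) (hr1 : r ≤ 1) (s t : ℝ)
    (hlaw : μ.map X = volume.withDensity fun z => ENNReal.ofReal (nu (z - s) r)) :
    mgf X μ (t * log 2) = 2 ^ (t * s) * phi t r := by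
  rw [← mgf_id_map hX, hlaw, mgf, integral_withDensity_eq_integral_toReal_smul (by fun_prop)
    (ae_of_all _ fun _ => ENNReal.ofReal_lt_top)]
  have hshift : ∀ z, (ENNReal.ofReal (nu (z - s) r)).toReal • exp (t * log 2 * id z)
      = 2 ^ (t * s) * ((2:ℝ) ^ (t * (z - s)) * nu (z - s) r) := fun z => by
    rw [ENNReal.toReal_ofReal (nu_nonneg hr0 hr1 _), smul_eq_mul, id, rpow_def_of_pos two_pos,
      rpow_def_of_pos two_pos, ← mul_assoc, ← exp_add]
    ring_nf
  simp_rw [hshift]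
  rw [integral_sub_right_eq_self (fun y => 2 ^ (t * s) * ((2:ℝ) ^ (t * y) * nu y r)) s,
    integral_const_mul, phi]

lemma one_sub_inv_card_mem_Ioo (F : Type*) [Fintype F] [Nontrivial F] :
    1 - (Fintype.card F : ℝ)⁻¹ ∈ Ioo 0 1 := by
  have hcard : (1:ℝ) < Fintype.card F := by exact_mod_cast Fintype.one_lt_card
  constructor
  · linarith [inv_lt_one_of_one_lt₀ hcard]
  · linarith [inv_pos.mpr (zero_lt_one.trans hcard)]

theorem stmt_7_general (F : Type*) [Field F] [Fintype F]
    (m : ℕ) (hm : 3 ≤ m) (c : ℝ) (hc : 0 < c)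
    (Ω : Type*) [MeasurableSpace Ω] (μ : Measure Ω)
    (W : Fin m → Ω → ℝ) (hWmeas : ∀ i, Measurable (W i))
    (hindep : iIndepFun W μ)
    (hWlaw : ∀ i, μ.map (W i) = volume.withDensity
      (fun z => ENNReal.ofReal (nu (z - Real.logb 2 (c / m)) (1 - (Fintype.card F : ℝ)⁻¹)))) :
    (∫ ω, (phi (1 / m) (1 - (Fintype.card F : ℝ)⁻¹) ^ m)⁻¹ * m *
        (2:ℝ) ^ ((1 / (m:ℝ)) * ∑ i, W i ω) ∂μ) = c := by
  set r := 1 - (Fintype.card F : ℝ)⁻¹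
  set s := logb 2 (c / m)
  obtain ⟨hr0, hr1⟩ := one_sub_inv_card_mem_Ioo F
  have hm3 : (3:ℝ) ≤ m := by exact_mod_cast hm
  have hphi : 0 < phi (1 / m) r :=
    phi_pos hr0 hr1 (by positivity) ((div_lt_one (by linarith)).mpr (by linarith))
  have hmgf : ∀ i, mgf (W i) μ (1 / m * log 2) = 2 ^ (1 / m * s) * phi (1 / m) r := fun i =>
    mgf_of_map_eq_withDensity_nu (hWmeas i).aemeasurable hr0.le hr1.le s _ (hWlaw i)
  calc _ = (phi (1 / m) r ^ m)⁻¹ * m * mgf (∑ i, W i) μ (1 / m * log 2) := by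
        rw [mgf, ← integral_const_mul]
        congr with ω
        rw [rpow_def_of_pos two_pos, Finset.sum_apply]
        ring_nf
    _ = (phi (1 / m) r ^ m)⁻¹ * m * (2 ^ (1 / m * s) * phi (1 / m) r) ^ m := by
        rw [hindep.mgf_sum hWmeas, Finset.prod_congr rfl fun i _ => hmgf i, Finset.prod_const,
          Finset.card_univ, Fintype.card_fin]
    _ = m * 2 ^ s := by
        rw [mul_pow, ← rpow_mul_natCast two_pos.le]
        field_simp
    _ = c := by
        rw [rpow_logb two_pos one_lt_two.ne' (by positivity)]
        field_simp

/-- Unbiasedness of the F-PCSA estimator: if `W₁, …, W_m` are independent,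
each with density `z ↦ ν(z − log₂(c/m), 1 − |F|⁻¹)`, then the estimator
`Ẑ = φ(1/m, r)^{−m} m 2^{(1/m) ∑ Wᵢ}` satisfies `𝔼[Ẑ] = c`. -/
theorem stmt_7 (F : Type*) [Field F] [Fintype F]
    (m : ℕ) (hm : 3 ≤ m) (c : ℝ) (hc : 0 < c)
    (Ω : Type*) [MeasurableSpace Ω] (μ : Measure Ω) [IsProbabilityMeasure μ]
    (W : Fin m → Ω → ℝ) (hWmeas : ∀ i, Measurable (W i))
    (hindep : iIndepFun W μ)
    (hWlaw : ∀ i, μ.map (W i) = volume.withDensity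
      (fun z => ENNReal.ofReal (nu (z - Real.logb 2 (c / m)) (1 - (Fintype.card F : ℝ)⁻¹)))) :
    (∫ ω, (phi (1 / m) (1 - (Fintype.card F : ℝ)⁻¹) ^ m)⁻¹ * m *
        (2:ℝ) ^ ((1 / (m:ℝ)) * ∑ i, W i ω) ∂μ) = c :=
  stmt_7_general F m hm c hc Ω μ W hWmeas hindep hWlaw
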